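/- (Cremona transformation in P^3.) Let m_1,m_2,m_3,m_4 and m̄ = (m_5,…,m_{4+n}) be integers and let d ≥ 0. If for points in general position in P^3 the fat points ideal I(m_1,m_2,m_3,m_4,m̄) contains a nonzero form of degree d, then for points in general position in P^3 the fat points ideal I(m_1+k, m_2+k, m_3+k, m_4+k, m̄) contains a nonzero form of degree d+k, where k = 2d − m_1 − m_2 − m_3 − m_4. -/

import Mathlib

open MvPolynomial Filter

/-- The homogeneous ideal of all forms vanishing at the (projective) point with
coordinate vector `p`. -/
noncomputable def pointIdeal {k : Type*} [Field k] {σ : Type*} (p : σ → k) :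
    Ideal (MvPolynomial σ k) :=
  Ideal.span { f | (∃ d, f.IsHomogeneous d) ∧ eval p f = 0 }

/-- The fat points ideal `⋂ⱼ m_{pⱼ}^{mⱼ}` (natural multiplicities). -/
noncomputable def fatIdeal {k : Type*} [Field k] {N n : ℕ} (p : Fin n → (Fin (N + 1) → k))
    (m : Fin n → ℕ) : Ideal (MvPolynomial (Fin (N + 1)) k) :=
  ⨅ j, pointIdeal (p j) ^ (m j)

/-- The fat points ideal with integer multiplicities, with the convention
`m_p^m = (1)` for `m ≤ 0`. -/
noncomputable def fatIdealZ {k : Type*} [Field k] {N n : ℕ} (p : Fin n → (Fin (N + 1) → k))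
    (m : Fin n → ℤ) : Ideal (MvPolynomial (Fin (N + 1)) k) :=
  ⨅ j, pointIdeal (p j) ^ (m j).toNat

/-- The irrelevant maximal ideal `M = (x_0, …, x_N)`. -/
noncomputable def maxIdeal (k : Type*) [Field k] (N : ℕ) : Ideal (MvPolynomial (Fin (N + 1)) k) :=
  Ideal.span (Set.range X)

/-- `α(I)`: the least `t ≥ 0` such that `I` contains a nonzero form of degree `t`. -/
noncomputable def alpha {k : Type*} [Field k] {σ : Type*}
    (I : Ideal (MvPolynomial σ k)) : ℕ :=
  sInf { t | ∃ f ∈ I, f ≠ 0 ∧ f.IsHomogeneous t }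

/-- The sequence `t ↦ α(I^{(t)})/t` attached to the fat points ideal with points `p`
and multiplicities `m`; its limit as `t → ∞` is the Waldschmidt constant `γ`. -/
noncomputable def alphaSeq {k : Type*} [Field k] {N n : ℕ}
    (p : Fin n → (Fin (N + 1) → k)) (m : Fin n → ℕ) (t : ℕ) : ℝ :=
  (alpha (fatIdeal p fun j => t * m j) : ℝ) / t

/-- `P` holds for `n`-tuples of points of `P^N` in general position: there is a
nonempty Zariski-open subset (the complement of the zero locus of a set `S` of
polynomials in the coordinates of the tuple) of tuples of nonzero coordinate
vectors on which `P` holds. -/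
def Generic (k : Type*) [Field k] (N n : ℕ)
    (P : (Fin n → (Fin (N + 1) → k)) → Prop) : Prop :=
  ∃ S : Set (MvPolynomial (Fin n × Fin (N + 1)) k),
    (∃ p : Fin n → (Fin (N + 1) → k), (∀ j, p j ≠ 0) ∧
      ∃ f ∈ S, eval (fun q => p q.1 q.2) f ≠ 0) ∧
    ∀ p : Fin n → (Fin (N + 1) → k), (∀ j, p j ≠ 0) →
      (∃ f ∈ S, eval (fun q => p q.1 q.2) f ≠ 0) → P p

/-!
The first `N + 1` points form a projective frame; in its coordinates they become the coordinate
points `eᵢ` and the remaining points vectors `u` with nonzero coordinates. Dividing the pullback of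
a form `F` of degree `d` under the standard Cremona map `xᵢ ↦ ∏_{l ≠ i} x_l` by `∏ xᵢ ^ mᵢ`
replaces each monomial `x^α` of `F` by `x^(d - m - α)`. When `F` vanishes to order `mᵢ` at each
`eᵢ` this is a polynomial of degree `d + c`, with `c = (N - 1) d - ∑ mᵢ`, vanishing to order
`mᵢ + c` at `eᵢ`; and since cancelling a monomial is harmless at a point with nonzero coordinates,
it vanishes at `u` to the order to which `F` vanishes at the Cremona image of `u`. General
position is transported because the normalisation, composed with all projectivities and
rescalings, is a family of polynomial maps whose images cover a dense open set.
-/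

open Finset
open scoped Matrix

section Homogeneous

variable {k σ : Type*} [Field k]

lemma MvPolynomial.IsHomogeneous.degree_of_mem_support {f : MvPolynomial σ k} {e : ℕ}
    (hf : f.IsHomogeneous e) {α : σ →₀ ℕ} (hα : α ∈ f.support) : α.degree = e := by
  rw [Finsupp.degree_eq_weight_one]; exact hf (mem_support_iff.mp hα)

lemma MvPolynomial.IsHomogeneous.eval_smul [Fintype σ] {f : MvPolynomial σ k} {e : ℕ}
    (hf : f.IsHomogeneous e) (a : k) (v : σ → k) : eval (a • v) f = a ^ e * eval v f := by
  simp only [eval_eq', Finset.mul_sum]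
  refine Finset.sum_congr rfl fun α hα => ?_
  have hdeg : ∑ i, α i = e := by
    rw [← Finsupp.degree_eq_sum]; exact hf.degree_of_mem_support hα
  simp only [Pi.smul_apply, smul_eq_mul, mul_pow, Finset.prod_mul_distrib,
    Finset.prod_pow_eq_pow_sum, hdeg]
  ring

lemma pointIdeal_smul [Fintype σ] {a : k} (ha : a ≠ 0) (v : σ → k) :
    pointIdeal (a • v) = pointIdeal v := by
  unfold pointIdeal
  congr 1
  ext f
  refine and_congr_right fun ⟨e, he⟩ => ?_
  rw [he.eval_smul, mul_eq_zero_iff_left (pow_ne_zero _ ha)]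

end Homogeneous

section PointIdeal

variable {k σ τ : Type*} [Field k]

lemma map_mem_pointIdeal_pow {A : MvPolynomial σ k →ₐ[k] MvPolynomial τ k}
    (hA : ∀ g e, IsHomogeneous g e → ∃ e', (A g).IsHomogeneous e') {u : σ → k} {v : τ → k}
    (hev : ∀ g, eval v (A g) = eval u g) {b : ℕ} {f : MvPolynomial σ k}
    (hf : f ∈ pointIdeal u ^ b) : A f ∈ pointIdeal v ^ b := by
  suffices h : Ideal.map A (pointIdeal u) ≤ pointIdeal v from
    Ideal.pow_right_mono h b (Ideal.map_pow A (pointIdeal u) b ▸ Ideal.mem_map_of_mem A hf)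
  rw [pointIdeal, Ideal.map_span, Ideal.span_le]
  rintro _ ⟨g, ⟨⟨e, hg⟩, hgu⟩, rfl⟩
  exact Ideal.subset_span ⟨hA g e hg, (hev g).trans hgu⟩

end PointIdeal

section LinearSubst

variable {k σ : Type*} [Field k] [Fintype σ]

noncomputable def linearSubst (M : Matrix σ σ k) : MvPolynomial σ k →ₐ[k] MvPolynomial σ k :=
  bind₁ fun i => ∑ l, C (M i l) * X l

lemma eval_linearSubst (M : Matrix σ σ k) (v : σ → k) (f : MvPolynomial σ k) :
    eval v (linearSubst M f) = eval (M *ᵥ v) f := by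
  induction f using MvPolynomial.induction_on with
  | C a => simp [linearSubst]
  | add p q hp hq => simp_all
  | mul_X p i hp => simp_all [linearSubst, Matrix.mulVec, dotProduct]

lemma linearSubst_linearSubst (M M' : Matrix σ σ k) (f : MvPolynomial σ k) :
    linearSubst M (linearSubst M' f) = linearSubst (M' * M) f := by
  rw [linearSubst, linearSubst, bind₁_bind₁, linearSubst]
  congr 2
  ext i : 1
  simp only [map_sum, map_mul, bind₁_C_right, bind₁_X_right, Matrix.mul_apply, Finset.mul_sum,
    Finset.sum_mul, mul_assoc]
  exact Finset.sum_comm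

lemma linearSubst_one [DecidableEq σ] (f : MvPolynomial σ k) : linearSubst 1 f = f := by
  rw [← AlgHom.id_apply (R := k) f]
  congr 1
  ext i
  simp [linearSubst, Matrix.one_apply]

lemma linearSubst_injective [DecidableEq σ] {M : Matrix σ σ k} (hM : IsUnit M.det) :
    Function.Injective (linearSubst M) := fun f g h => by
  simpa [linearSubst_linearSubst, Matrix.mul_nonsing_inv _ hM, linearSubst_one] using
    congrArg (linearSubst M⁻¹) h

lemma MvPolynomial.IsHomogeneous.linearSubst {f : MvPolynomial σ k} {e : ℕ}
    (hf : f.IsHomogeneous e) (M : Matrix σ σ k) : (linearSubst M f).IsHomogeneous e := by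
  have := hf.aeval (fun i => ∑ l, C (M i l) * X l) fun i =>
    IsHomogeneous.sum _ _ _ fun l _ => isHomogeneous_C_mul_X (M i l) l
  rwa [one_mul] at this

lemma linearSubst_mem_pointIdeal_pow {M : Matrix σ σ k} {u v : σ → k} (h : M *ᵥ v = u) {b : ℕ}
    {f : MvPolynomial σ k} (hf : f ∈ pointIdeal u ^ b) : linearSubst M f ∈ pointIdeal v ^ b :=
  map_mem_pointIdeal_pow (fun _ e hg => ⟨e, hg.linearSubst M⟩)
    (fun g => by rw [eval_linearSubst, h]) hf

lemma linearSubst_mem_fatIdealZ {N n : ℕ} {M : Matrix (Fin (N + 1)) (Fin (N + 1)) k}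
    {v w : Fin n → Fin (N + 1) → k} (h : ∀ j, ∃ a : k, a ≠ 0 ∧ M *ᵥ v j = a • w j) {m : Fin n → ℤ}
    {f : MvPolynomial (Fin (N + 1)) k} (hf : f ∈ fatIdealZ w m) :
    linearSubst M f ∈ fatIdealZ v m := by
  simp only [fatIdealZ, Ideal.mem_iInf] at hf ⊢
  intro j
  obtain ⟨a, ha, hj⟩ := h j
  exact linearSubst_mem_pointIdeal_pow hj (pointIdeal_smul ha (w j) ▸ hf j)

end LinearSubst

lemma Finsupp.degree_eq_add_degree_erase {σ : Type*} (α : σ →₀ ℕ) (i : σ) :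
    α.degree = α i + (α.erase i).degree := by
  conv_lhs => rw [← Finsupp.single_add_erase i α]
  rw [map_add, Finsupp.degree_single]

lemma Finsupp.eq_single_degree_of_erase_eq_zero {σ : Type*} {α : σ →₀ ℕ} {i : σ}
    (h : α.erase i = 0) : α = Finsupp.single i α.degree := by
  conv_lhs => rw [← Finsupp.single_add_erase i α, h, add_zero]
  rw [Finsupp.degree_eq_add_degree_erase α i, h, map_zero, add_zero]

lemma Finsupp.degree_erase_eq_sum {σ : Type*} [Fintype σ] [DecidableEq σ] (α : σ →₀ ℕ) (l : σ) :
    (α.erase l).degree = ∑ i ∈ univ.erase l, α i := by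
  have := Finset.add_sum_erase univ α (mem_univ l)
  rw [← Finsupp.degree_eq_sum, Finsupp.degree_eq_add_degree_erase α l] at this
  omega

section StandardPoint

variable {k σ : Type*} [Field k] [DecidableEq σ]

lemma MvPolynomial.IsHomogeneous.eval_piSingle_one [Fintype σ] {g : MvPolynomial σ k} {e : ℕ}
    (hg : g.IsHomogeneous e) (i : σ) :
    eval (Pi.single i 1) g = coeff (Finsupp.single i e) g := by
  rw [eval_eq', Finset.sum_eq_single (Finsupp.single i e)]
  · rw [Finset.prod_eq_one fun l _ => ?_, mul_one]
    rcases eq_or_ne l i with rfl | hl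
    · simp
    · simp [hl]
  · intro α hα hne
    by_cases hg0 : coeff α g = 0
    · rw [hg0, zero_mul]
    obtain ⟨l, hl⟩ : ∃ l, α.erase i l ≠ 0 := by
      by_contra! h
      refine hne ?_
      rw [Finsupp.eq_single_degree_of_erase_eq_zero (Finsupp.ext h),
        hg.degree_of_mem_support (mem_support_iff.mpr hg0)]
    have hli : l ≠ i := fun h => hl (h ▸ Finsupp.erase_same)
    rw [Finsupp.erase_ne hli] at hl
    rw [Finset.prod_eq_zero (Finset.mem_univ l) (by simp [hli, hl]), mul_zero]
  · exact fun h => by rw [notMem_support_iff.mp h, zero_mul]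

lemma X_mem_pointIdeal_piSingle {i l : σ} (h : l ≠ i) :
    (X l : MvPolynomial σ k) ∈ pointIdeal (Pi.single i 1) :=
  Ideal.subset_span ⟨⟨1, isHomogeneous_X k l⟩, by simp [h]⟩

lemma monomial_mem_pointIdeal_piSingle_pow {i : σ} {b : ℕ} {α : σ →₀ ℕ}
    (h : b ≤ (α.erase i).degree) (c : k) :
    monomial α c ∈ pointIdeal (Pi.single i 1) ^ b := by
  have hErase : monomial (α.erase i) (1 : k) ∈ pointIdeal (Pi.single i 1) ^ (α.erase i).degree := by
    rw [monomial_eq, C_1, one_mul, Finsupp.prod, Finsupp.degree_apply,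
      ← Finset.prod_pow_eq_pow_sum]
    refine Ideal.prod_mem_prod fun l hl => Ideal.pow_mem_pow (X_mem_pointIdeal_piSingle ?_) _
    rintro rfl
    exact Finsupp.mem_support_iff.mp hl Finsupp.erase_same
  rw [← Finsupp.single_add_erase i α, ← mul_one c, ← monomial_mul]
  exact Ideal.pow_le_pow_right h (Ideal.mul_mem_left _ _ hErase)

variable (k) in
def coordOrderIdeal (i : σ) (b : ℕ) : Ideal (MvPolynomial σ k) where
  carrier := {f | ∀ α ∈ f.support, b ≤ (α.erase i).degree}
  zero_mem' := by simp
  add_mem' hf hg α hα := by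
    rcases Finset.mem_union.mp (support_add hα) with h | h
    exacts [hf α h, hg α h]
  smul_mem' c f hf α hα := by
    obtain ⟨β, -, γ, hγ, rfl⟩ := Finset.mem_add.mp (support_mul c f hα)
    rw [Finsupp.erase_add, map_add]
    exact le_add_left (hf γ hγ)

lemma mem_coordOrderIdeal {i : σ} {b : ℕ} {f : MvPolynomial σ k} :
    f ∈ coordOrderIdeal k i b ↔ ∀ α ∈ f.support, b ≤ (α.erase i).degree := Iff.rfl

lemma mul_mem_coordOrderIdeal {i : σ} {a b : ℕ} {f g : MvPolynomial σ k}
    (hf : f ∈ coordOrderIdeal k i a) (hg : g ∈ coordOrderIdeal k i b) :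
    f * g ∈ coordOrderIdeal k i (a + b) := fun α hα => by
  obtain ⟨β, hβ, γ, hγ, rfl⟩ := Finset.mem_add.mp (support_mul f g hα)
  rw [Finsupp.erase_add, map_add]
  exact add_le_add (hf β hβ) (hg γ hγ)

lemma pointIdeal_piSingle_le [Fintype σ] (i : σ) :
    pointIdeal (Pi.single i 1) ≤ coordOrderIdeal k i 1 := by
  rw [pointIdeal, Ideal.span_le]
  rintro g ⟨⟨e, hg⟩, hg0⟩ α hα
  rw [Nat.one_le_iff_ne_zero, Ne, Finsupp.degree_eq_zero_iff]
  intro h0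
  rw [hg.eval_piSingle_one, ← hg.degree_of_mem_support hα,
    ← Finsupp.eq_single_degree_of_erase_eq_zero h0] at hg0
  exact mem_support_iff.mp hα hg0

lemma pointIdeal_piSingle_pow [Fintype σ] (i : σ) (b : ℕ) :
    pointIdeal (Pi.single i 1) ^ b = coordOrderIdeal k i b := by
  refine le_antisymm ?_ fun f hf => ?_
  · induction b with
    | zero => exact fun f _ α _ => Nat.zero_le _
    | succ b ih =>
      rw [pow_succ]
      exact Ideal.mul_le.mpr fun f hf g hg =>
        mul_mem_coordOrderIdeal (ih hf) (pointIdeal_piSingle_le i hg)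
  · rw [← support_sum_monomial_coeff f]
    exact Ideal.sum_mem _ fun α hα => monomial_mem_pointIdeal_piSingle_pow (hf α hα) _

lemma add_le_of_mem_pointIdeal_piSingle_pow [Fintype σ] {F : MvPolynomial σ k} {d : ℕ}
    (hF : F.IsHomogeneous d) {i : σ} {a : ℤ}
    (h : F ∈ pointIdeal (Pi.single i 1) ^ a.toNat) {α : σ →₀ ℕ} (hα : α ∈ F.support) :
    a + α i ≤ d := by
  rw [pointIdeal_piSingle_pow] at h
  have h1 := h α hα
  have h2 := Finsupp.degree_eq_add_degree_erase α i
  rw [hF.degree_of_mem_support hα] at h2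
  omega

end StandardPoint

section Cancellation

variable {k σ : Type*} [Field k] [DecidableEq σ]

/- A monomial `x^β` of `H` of least order at `eᵢ` gives the monomial `xᵢ x^β` of `ℓ H`, of the same
order: any other way of producing it uses a monomial of `H` of smaller order. -/
lemma mem_coordOrderIdeal_of_linear_mul {i : σ} {b : ℕ} {ℓ H : MvPolynomial σ k}
    (hℓ : ℓ.IsHomogeneous 1) (hℓi : coeff (Finsupp.single i 1) ℓ ≠ 0)
    (h : ℓ * H ∈ coordOrderIdeal k i b) : H ∈ coordOrderIdeal k i b := by
  by_contra hH
  obtain ⟨α, hα, hαb⟩ : ∃ α ∈ H.support, (α.erase i).degree < b := by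
    simpa [mem_coordOrderIdeal] using hH
  obtain ⟨β, hβ, hmin⟩ := H.support.exists_min_image (fun β => (β.erase i).degree) ⟨α, hα⟩
  have hcoeff :
      coeff (β + Finsupp.single i 1) (ℓ * H) = coeff (Finsupp.single i 1) ℓ * coeff β H := by
    rw [coeff_mul, Finset.sum_eq_single (Finsupp.single i 1, β)]
    · rintro ⟨u, v⟩ huv hne
      rw [Finset.HasAntidiagonal.mem_antidiagonal] at huv
      by_contra hne0
      obtain ⟨hu, hv⟩ := mul_ne_zero_iff.mp hne0
      have hu1 := hℓ.degree_of_mem_support (mem_support_iff.mpr hu)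
      have hdeg := congrArg (fun α => (α.erase i).degree) huv
      simp only [Finsupp.erase_add, map_add, Finsupp.erase_single, add_zero] at hdeg
      rcases Nat.eq_zero_or_pos (u.erase i).degree with hu0 | hu0
      · rw [Finsupp.degree_eq_zero_iff] at hu0
        obtain rfl : u = Finsupp.single i 1 := hu1 ▸ Finsupp.eq_single_degree_of_erase_eq_zero hu0
        rw [add_comm β] at huv
        exact hne (by simpa using add_left_cancel huv)
      · have := hmin v (mem_support_iff.mpr hv)
        omega
    · exact fun h => absurd (Finset.HasAntidiagonal.mem_antidiagonal.mpr (add_comm _ _)) h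
  have hmem : β + Finsupp.single i 1 ∈ (ℓ * H).support := by
    rw [mem_support_iff, hcoeff]
    exact mul_ne_zero hℓi (mem_support_iff.mp hβ)
  refine (h _ hmem).not_gt ?_
  simpa [Finsupp.erase_add] using (hmin α hα).trans_lt hαb

lemma mem_pointIdeal_pow_of_linear_mul [Fintype σ] {v : σ → k} {ℓ H : MvPolynomial σ k}
    (hℓ : ℓ.IsHomogeneous 1) (hℓv : eval v ℓ ≠ 0) {b : ℕ} (h : ℓ * H ∈ pointIdeal v ^ b) :
    H ∈ pointIdeal v ^ b := by
  obtain ⟨i, hi⟩ : ∃ i, v i ≠ 0 := by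
    by_contra! hv
    exact hℓv (by simpa [funext hv] using hℓ.eval_smul 0 v)
  set M := (1 : Matrix σ σ k).updateCol i v
  have hMe : M *ᵥ Pi.single i 1 = v := by
    rw [Matrix.mulVec_single_one]; ext; simp [M]
  have hM : IsUnit M.det := by
    have := Matrix.cramer_apply (1 : Matrix σ σ k) v i
    rw [Matrix.cramer_one] at this
    exact isUnit_iff_ne_zero.mpr (this ▸ hi)
  have hMH : linearSubst M H ∈ pointIdeal (Pi.single i 1) ^ b := by
    have h' := linearSubst_mem_pointIdeal_pow hMe h
    rw [map_mul, pointIdeal_piSingle_pow] at h'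
    rw [pointIdeal_piSingle_pow]
    refine mem_coordOrderIdeal_of_linear_mul (hℓ.linearSubst M) ?_ h'
    rwa [← (hℓ.linearSubst M).eval_piSingle_one, eval_linearSubst, hMe]
  have hMv : M⁻¹ *ᵥ v = Pi.single i 1 := by
    rw [← hMe, Matrix.mulVec_mulVec, Matrix.nonsing_inv_mul _ hM, Matrix.one_mulVec]
  simpa [linearSubst_linearSubst, Matrix.mul_nonsing_inv _ hM, linearSubst_one] using
    linearSubst_mem_pointIdeal_pow hMv hMH

lemma mem_pointIdeal_pow_of_monomial_mul [Fintype σ] {v : σ → k} (hv : ∀ l, v l ≠ 0) {b : ℕ}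
    {u : σ →₀ ℕ} {H : MvPolynomial σ k} (h : monomial u 1 * H ∈ pointIdeal v ^ b) :
    H ∈ pointIdeal v ^ b := by
  have hX : ∀ l n H, X l ^ n * H ∈ pointIdeal v ^ b → H ∈ pointIdeal v ^ b := by
    intro l n
    induction n with
    | zero => simp
    | succ n ih =>
      intro H hH
      rw [pow_succ', mul_assoc] at hH
      exact ih H (mem_pointIdeal_pow_of_linear_mul (isHomogeneous_X k l) (by simpa using hv l) hH)
  induction u using Finsupp.induction generalizing H with
  | zero => simpa using h
  | single_add l n u _ _ ih =>
    rw [monomial_single_add, mul_assoc] at h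
    exact ih (hX l n _ h)

end Cancellation

section CremonaSubst

variable {σ : Type*} [Fintype σ] [DecidableEq σ]

def cremonaPt {R : Type*} [CommMonoid R] (v : σ → R) : σ → R :=
  fun i => ∏ l ∈ univ.erase i, v l

variable {k : Type*} [Field k]

variable (k) in
noncomputable def cremonaSubst : MvPolynomial σ k →ₐ[k] MvPolynomial σ k :=
  bind₁ (cremonaPt X)

lemma eval_cremonaSubst (w : σ → k) (f : MvPolynomial σ k) :
    eval w (cremonaSubst k f) = eval (cremonaPt w) f := by
  induction f using MvPolynomial.induction_on with
  | C a => simp [cremonaSubst]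
  | add p q hp hq => simp_all
  | mul_X p i hp => simp_all [cremonaSubst, cremonaPt]

lemma MvPolynomial.IsHomogeneous.cremonaSubst {f : MvPolynomial σ k} {e : ℕ}
    (hf : f.IsHomogeneous e) : (cremonaSubst k f).IsHomogeneous ((Fintype.card σ - 1) * e) :=
  hf.aeval _ fun i => by
    simpa [cremonaPt, Finset.card_erase_of_mem] using
      IsHomogeneous.prod (univ.erase i) (fun l => (X l : MvPolynomial σ k)) (fun _ => 1)
        fun l _ => isHomogeneous_X k l

lemma cremonaSubst_mem_pointIdeal_pow {w : σ → k} {b : ℕ} {f : MvPolynomial σ k}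
    (hf : f ∈ pointIdeal (cremonaPt w) ^ b) : cremonaSubst k f ∈ pointIdeal w ^ b :=
  map_mem_pointIdeal_pow (fun _ _ hg => ⟨_, hg.cremonaSubst⟩) (eval_cremonaSubst w) hf

lemma cremonaSubst_monomial (α : σ →₀ ℕ) (c : k) :
    cremonaSubst k (monomial α c) =
      monomial (Finsupp.equivFunOnFinite.symm fun l => (α.erase l).degree) c := by
  rw [cremonaSubst, bind₁_monomial, monomial_eq, Finsupp.prod_fintype _ _ (fun _ => pow_zero _),
    Finset.prod_subset (subset_univ _) fun i _ hi => by
      rw [Finsupp.notMem_support_iff.mp hi, pow_zero]]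
  congr 1
  simp only [cremonaPt, Finsupp.equivFunOnFinite_symm_apply_apply, Finsupp.degree_erase_eq_sum,
    ← Finset.prod_pow, ← Finset.prod_pow_eq_pow_sum]
  refine Finset.prod_comm' fun i l => ?_
  simp [and_comm, eq_comm]

lemma cremonaPt_ne_zero {v : σ → k} (hv : ∀ l, v l ≠ 0) (i : σ) : cremonaPt v i ≠ 0 :=
  Finset.prod_ne_zero_iff.mpr fun l _ => hv l

lemma cremonaPt_cremonaPt {v : σ → k} (hv : ∀ l, v l ≠ 0) :
    cremonaPt (cremonaPt v) = (∏ l, v l) ^ ((Fintype.card σ : ℤ) - 2) • v := by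
  have hP : ∏ l, v l ≠ 0 := Finset.prod_ne_zero_iff.mpr fun l _ => hv l
  have hdiv : ∀ i, cremonaPt v i = (∏ l, v l) / v i := fun i => by
    rw [eq_div_iff (hv i), cremonaPt, mul_comm, Finset.mul_prod_erase _ _ (mem_univ i)]
  funext i
  have hcard : ((univ.erase i).card : ℤ) = Fintype.card σ - 1 := by
    rw [Finset.card_erase_of_mem (mem_univ i), Finset.card_univ,
      Nat.cast_sub (Fintype.card_pos_iff.mpr ⟨i⟩)]
    rfl
  rw [Pi.smul_apply, smul_eq_mul, show cremonaPt (cremonaPt v) i = ∏ l ∈ univ.erase i, cremonaPt v l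
    from rfl, Finset.prod_congr rfl fun l _ => hdiv l, Finset.prod_div_distrib, Finset.prod_const,
    show ∏ l ∈ univ.erase i, v l = cremonaPt v i from rfl, hdiv, ← zpow_natCast, hcard]
  rw [show (Fintype.card σ : ℤ) - 1 = (Fintype.card σ - 2) + 1 by ring, zpow_add_one₀ hP]
  field_simp

end CremonaSubst

section CremonaTransform

variable {σ : Type*} [Fintype σ] {k : Type*} [Field k]

noncomputable def cremonaExponent (d : ℕ) (m : σ → ℤ) (α : σ →₀ ℕ) : σ →₀ ℕ :=
  Finsupp.equivFunOnFinite.symm fun i => (d - m i - α i).toNat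

/- Up to the monomial factors of `monomial_mul_cremonaTransform` this is the pullback under the
Cremona map; the exponents `d - mᵢ - αᵢ` are nonnegative when `F` vanishes to order `mᵢ` at `eᵢ`. -/
noncomputable def cremonaTransform (d : ℕ) (m : σ → ℤ) (F : MvPolynomial σ k) :
    MvPolynomial σ k :=
  ∑ α ∈ F.support, monomial (cremonaExponent d m α) (coeff α F)

variable {d : ℕ} {m : σ → ℤ} {F : MvPolynomial σ k}

lemma cremonaExponent_apply {α : σ →₀ ℕ} (h : ∀ i, m i + α i ≤ d) (i : σ) :
    (cremonaExponent d m α i : ℤ) = d - m i - α i := by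
  simp only [cremonaExponent, Finsupp.equivFunOnFinite_symm_apply_apply]
  have := h i
  omega

lemma coeff_cremonaTransform (hm : ∀ α ∈ F.support, ∀ i, m i + α i ≤ d) {α : σ →₀ ℕ}
    (hα : α ∈ F.support) :
    coeff (cremonaExponent d m α) (cremonaTransform d m F) = coeff α F := by
  classical
  rw [cremonaTransform, coeff_sum, Finset.sum_eq_single α]
  · rw [coeff_monomial, if_pos rfl]
  · intro β hβ hne
    rw [coeff_monomial, if_neg]
    intro heq
    refine hne (Finsupp.ext fun i => ?_)
    have := congrArg (fun γ : σ →₀ ℕ => (γ i : ℤ)) heq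
    simp only [cremonaExponent_apply (hm β hβ), cremonaExponent_apply (hm α hα)] at this
    omega
  · exact fun h => absurd hα h

lemma cremonaTransform_ne_zero (hm : ∀ α ∈ F.support, ∀ i, m i + α i ≤ d) (hF : F ≠ 0) :
    cremonaTransform d m F ≠ 0 := by
  obtain ⟨α, hα⟩ := support_nonempty.mpr hF
  intro h
  have := coeff_cremonaTransform hm hα
  rw [h, coeff_zero] at this
  exact mem_support_iff.mp hα this.symm

lemma degree_cremonaExponent {α : σ →₀ ℕ} (hα : α.degree = d) (h : ∀ i, m i + α i ≤ d) :
    ((cremonaExponent d m α).degree : ℤ) = (Fintype.card σ - 1) * d - ∑ i, m i := by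
  rw [Finsupp.degree_eq_sum, Nat.cast_sum]
  simp only [cremonaExponent_apply h, Finset.sum_sub_distrib, Finset.sum_const, Finset.card_univ,
    nsmul_eq_mul]
  rw [← Nat.cast_sum, ← Finsupp.degree_eq_sum, hα]
  ring

lemma isHomogeneous_cremonaTransform (hF : F.IsHomogeneous d)
    (hm : ∀ α ∈ F.support, ∀ i, m i + α i ≤ d) {t : ℕ}
    (ht : (t : ℤ) = (Fintype.card σ - 1) * d - ∑ i, m i) :
    (cremonaTransform d m F).IsHomogeneous t :=
  IsHomogeneous.sum _ _ _ fun α hα => isHomogeneous_monomial _ <| by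
    exact_mod_cast (degree_cremonaExponent (hF.degree_of_mem_support hα) (hm α hα)).trans ht.symm

lemma cremonaTransform_mem_pointIdeal_piSingle_pow [DecidableEq σ] (hF : F.IsHomogeneous d)
    (hm : ∀ α ∈ F.support, ∀ i, m i + α i ≤ d) {c : ℤ}
    (hc : c = (Fintype.card σ - 2) * d - ∑ i, m i) (i : σ) :
    cremonaTransform d m F ∈ pointIdeal (Pi.single i 1) ^ (m i + c).toNat := by
  refine Ideal.sum_mem _ fun α hα => monomial_mem_pointIdeal_piSingle_pow ?_ _
  have hdeg := degree_cremonaExponent (hF.degree_of_mem_support hα) (hm α hα)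
  rw [Finsupp.degree_eq_add_degree_erase _ i, Nat.cast_add, cremonaExponent_apply (hm α hα)] at hdeg
  rw [Int.toNat_le]
  linarith [(α i).cast_nonneg (α := ℤ)]

lemma monomial_mul_cremonaTransform [DecidableEq σ] (hF : F.IsHomogeneous d)
    (hm : ∀ α ∈ F.support, ∀ i, m i + α i ≤ d) :
    monomial (Finsupp.equivFunOnFinite.symm fun i => (m i).toNat) 1 * cremonaTransform d m F =
      monomial (Finsupp.equivFunOnFinite.symm fun i => (-m i).toNat) 1 * cremonaSubst k F := by
  conv_rhs => rw [← support_sum_monomial_coeff F]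
  rw [cremonaTransform, map_sum, Finset.mul_sum, Finset.mul_sum]
  refine Finset.sum_congr rfl fun α hα => ?_
  rw [cremonaSubst_monomial, monomial_mul, monomial_mul]
  congr 2
  ext i
  have h1 := cremonaExponent_apply (hm α hα) i
  have h2 := Finsupp.degree_eq_add_degree_erase α i
  rw [hF.degree_of_mem_support hα] at h2
  simp only [Finsupp.add_apply, Finsupp.equivFunOnFinite_symm_apply_apply]
  omega

lemma cremonaTransform_mem_pointIdeal_pow [DecidableEq σ] (hF : F.IsHomogeneous d)
    (hm : ∀ α ∈ F.support, ∀ i, m i + α i ≤ d) {w : σ → k} (hw : ∀ l, w l ≠ 0) {b : ℕ}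
    (hFw : F ∈ pointIdeal (cremonaPt w) ^ b) : cremonaTransform d m F ∈ pointIdeal w ^ b := by
  refine mem_pointIdeal_pow_of_monomial_mul hw
    (u := Finsupp.equivFunOnFinite.symm fun i => (m i).toNat) ?_
  rw [monomial_mul_cremonaTransform hF hm]
  exact Ideal.mul_mem_left _ _ (cremonaSubst_mem_pointIdeal_pow hFw)

end CremonaTransform

/- `Q` holds where `D` and some `f ∘ Ψ i` with `f ∈ S` do not vanish; this open set is nonempty
because the images of the `Φ i` cover the locus `D ≠ 0`. -/
theorem Generic.of_polynomial_maps {k : Type*} [Field k] [Infinite k] {N n : ℕ}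
    {P Q : (Fin n → Fin (N + 1) → k) → Prop} (hP : Generic k N n P) {ι : Type*}
    (Φ : ι → (Fin n → Fin (N + 1) → k) → Fin n → Fin (N + 1) → k)
    (Ψ : ι → Fin n → Fin (N + 1) → MvPolynomial (Fin n × Fin (N + 1)) k)
    (hΨ : ∀ i p, Φ i p = fun j r => eval (Function.uncurry p) (Ψ i j r))
    {D : MvPolynomial (Fin n × Fin (N + 1)) k} (hD : D ≠ 0)
    (hD_ne : ∀ p, eval (Function.uncurry p) D ≠ 0 → ∀ j, p j ≠ 0)
    (hΦ_ne : ∀ i p, eval (Function.uncurry p) D ≠ 0 → ∀ j, Φ i p j ≠ 0)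
    (hΦ_surj : ∀ x, eval (Function.uncurry x) D ≠ 0 →
      ∃ i p, eval (Function.uncurry p) D ≠ 0 ∧ Φ i p = x)
    (hPQ : ∀ i p, eval (Function.uncurry p) D ≠ 0 → P (Φ i p) → Q p) :
    Generic k N n Q := by
  obtain ⟨S, ⟨p₀, -, f₀, hf₀S, hf₀⟩, hS⟩ := hP
  have heval : ∀ i p f, eval (fun q : Fin n × Fin (N + 1) => p q.1 q.2)
      (bind₁ (fun q => Ψ i q.1 q.2) f) = eval (fun q : Fin n × Fin (N + 1) => Φ i p q.1 q.2) f := by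
    intro i p f
    rw [hΨ]
    simp only [eval, eval₂Hom_bind₁]
    rfl
  refine ⟨{h | ∃ i, ∃ f ∈ S, h = D * bind₁ (fun q => Ψ i q.1 q.2) f}, ?_, ?_⟩
  · have hf₀0 : f₀ ≠ 0 := by rintro rfl; exact hf₀ (map_zero _)
    obtain ⟨x, hx⟩ : ∃ x, eval x (f₀ * D) ≠ 0 := by
      by_contra! h
      exact mul_ne_zero hf₀0 hD (MvPolynomial.funext fun x => by simpa using h x)
    rw [map_mul] at hx
    obtain ⟨i, p, hpD, hpx⟩ := hΦ_surj (Function.curry x) (by simpa using right_ne_zero_of_mul hx)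
    refine ⟨p, hD_ne p hpD, _, ⟨i, f₀, hf₀S, rfl⟩, ?_⟩
    rw [map_mul, heval, hpx]
    exact mul_ne_zero hpD (left_ne_zero_of_mul hx)
  · rintro p hp ⟨_, ⟨i, f, hfS, rfl⟩, hpf⟩
    rw [map_mul, heval] at hpf
    exact hPQ i p (left_ne_zero_of_mul hpf)
      (hS _ (hΦ_ne i p (left_ne_zero_of_mul hpf)) ⟨f, hfS, right_ne_zero_of_mul hpf⟩)

section Frame

variable {N n : ℕ} {R S : Type*} [CommRing R] [CommRing S]

def frameMatrix (p : Fin (N + 1 + n) → Fin (N + 1) → R) : Matrix (Fin (N + 1)) (Fin (N + 1)) R :=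
  Matrix.of fun r i => p (Fin.castAdd n i) r

def frameCoords (p : Fin (N + 1 + n) → Fin (N + 1) → R) (j : Fin n) : Fin (N + 1) → R :=
  (frameMatrix p).adjugate *ᵥ p (Fin.natAdd (N + 1) j)

/- Nonzero exactly when the first `N + 1` points form a frame and no other point lies on a
coordinate hyperplane of that frame. -/
def frameDiscr (p : Fin (N + 1 + n) → Fin (N + 1) → R) : R :=
  (frameMatrix p).det * ∏ j, ∏ i, frameCoords p j i

def cremonaNormalForm (p : Fin (N + 1 + n) → Fin (N + 1) → R) :
    Fin (N + 1 + n) → Fin (N + 1) → R :=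
  Fin.append (fun i => Pi.single i 1) fun j => cremonaPt (frameCoords p j)

lemma frameMatrix_mulVec_piSingle (p : Fin (N + 1 + n) → Fin (N + 1) → R) (i : Fin (N + 1)) :
    frameMatrix p *ᵥ Pi.single i 1 = p (Fin.castAdd n i) := by
  rw [Matrix.mulVec_single_one]; rfl

lemma frameMatrix_mulVec_frameCoords (p : Fin (N + 1 + n) → Fin (N + 1) → R) (j : Fin n) :
    frameMatrix p *ᵥ frameCoords p j = (frameMatrix p).det • p (Fin.natAdd (N + 1) j) := by
  rw [frameCoords, Matrix.mulVec_mulVec, Matrix.mul_adjugate, Matrix.smul_mulVec,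
    Matrix.one_mulVec]

lemma map_frameMatrix (f : R →+* S) (p : Fin (N + 1 + n) → Fin (N + 1) → R) :
    f.mapMatrix (frameMatrix p) = frameMatrix fun j r => f (p j r) := rfl

lemma map_frameCoords (f : R →+* S) (p : Fin (N + 1 + n) → Fin (N + 1) → R) (j : Fin n)
    (i : Fin (N + 1)) : f (frameCoords p j i) = frameCoords (fun j r => f (p j r)) j i := by
  rw [frameCoords, RingHom.map_mulVec, ← RingHom.mapMatrix_apply, RingHom.map_adjugate,
    map_frameMatrix]
  rfl

lemma map_frameDiscr (f : R →+* S) (p : Fin (N + 1 + n) → Fin (N + 1) → R) :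
    f (frameDiscr p) = frameDiscr fun j r => f (p j r) := by
  simp only [frameDiscr, map_mul, map_prod, RingHom.map_det, map_frameMatrix, map_frameCoords]

lemma map_cremonaNormalForm (f : R →+* S) (p : Fin (N + 1 + n) → Fin (N + 1) → R)
    (j : Fin (N + 1 + n)) (r : Fin (N + 1)) :
    f (cremonaNormalForm p j r) = cremonaNormalForm (fun j r => f (p j r)) j r := by
  induction j using Fin.addCases with
  | left i => simp [cremonaNormalForm, Pi.single_apply, apply_ite f]
  | right j => simp [cremonaNormalForm, cremonaPt, map_prod, map_frameCoords]

end Frame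

section FrameField

variable {k : Type*} [Field k] {N n : ℕ}

lemma mem_fatIdealZ_append {v : Fin (N + 1) → Fin (N + 1) → k} {w : Fin n → Fin (N + 1) → k}
    {m : Fin (N + 1) → ℤ} {m' : Fin n → ℤ} {f : MvPolynomial (Fin (N + 1)) k} :
    f ∈ fatIdealZ (Fin.append v w) (Fin.append m m') ↔
      (∀ i, f ∈ pointIdeal (v i) ^ (m i).toNat) ∧ ∀ j, f ∈ pointIdeal (w j) ^ (m' j).toNat := by
  simp [fatIdealZ, Fin.forall_fin_add]

lemma exists_mem_fatIdealZ_cremona {u : Fin n → Fin (N + 1) → k} (hu : ∀ j l, u j l ≠ 0)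
    {m : Fin (N + 1) → ℤ} {mbar : Fin n → ℤ} {d : ℕ} {c : ℤ} (hc : c = (N - 1) * d - ∑ i, m i)
    {F : MvPolynomial (Fin (N + 1)) k} (hF0 : F ≠ 0) (hFd : F.IsHomogeneous d)
    (hF : F ∈ fatIdealZ (Fin.append (fun i => Pi.single i 1) fun j => cremonaPt (u j))
      (Fin.append m mbar)) :
    ∃ G ∈ fatIdealZ (Fin.append (fun i => Pi.single i 1) u) (Fin.append (fun i => m i + c) mbar),
      G ≠ 0 ∧ ∃ t : ℕ, (t : ℤ) = d + c ∧ G.IsHomogeneous t := by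
  rw [mem_fatIdealZ_append] at hF
  have hm : ∀ α ∈ F.support, ∀ i, m i + α i ≤ d := fun α hα i =>
    add_le_of_mem_pointIdeal_piSingle_pow hFd (hF.1 i) hα
  have hcard : ((Fintype.card (Fin (N + 1)) : ℕ) : ℤ) = N + 1 := by simp
  obtain ⟨α, hα⟩ := support_nonempty.mpr hF0
  refine ⟨cremonaTransform d m F, mem_fatIdealZ_append.mpr ⟨fun i => ?_, fun j => ?_⟩,
    cremonaTransform_ne_zero hm hF0, (cremonaExponent d m α).degree, ?_,
    isHomogeneous_cremonaTransform hFd hm ?_⟩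
  · exact cremonaTransform_mem_pointIdeal_piSingle_pow hFd hm (by rw [hcard, hc]; ring) i
  · exact cremonaTransform_mem_pointIdeal_pow hFd hm (hu j) (hF.2 j)
  · rw [degree_cremonaExponent (hFd.degree_of_mem_support hα) (hm α hα), hcard, hc]; ring
  · exact degree_cremonaExponent (hFd.degree_of_mem_support hα) (hm α hα)

lemma frameDiscr_ne_zero_iff {p : Fin (N + 1 + n) → Fin (N + 1) → k} :
    frameDiscr p ≠ 0 ↔ (frameMatrix p).det ≠ 0 ∧ ∀ j i, frameCoords p j i ≠ 0 := by
  simp [frameDiscr, Finset.prod_ne_zero_iff]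

lemma ne_zero_of_frameDiscr_ne_zero {p : Fin (N + 1 + n) → Fin (N + 1) → k}
    (hp : frameDiscr p ≠ 0) (j : Fin (N + 1 + n)) : p j ≠ 0 := by
  obtain ⟨hA, hu⟩ := frameDiscr_ne_zero_iff.mp hp
  induction j using Fin.addCases with
  | left i => exact fun h => hA (Matrix.det_eq_zero_of_column_eq_zero i fun r => by
      simp [frameMatrix, h])
  | right j => exact fun h => hu j 0 (by simp [frameCoords, h])

lemma eval_frameDiscr (p : Fin (N + 1 + n) → Fin (N + 1) → k) :
    eval (Function.uncurry p) (frameDiscr fun j r => X (j, r)) = frameDiscr p := by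
  simp [map_frameDiscr]

lemma frameDiscr_X_ne_zero :
    (frameDiscr fun j r => X (j, r) : MvPolynomial (Fin (N + 1 + n) × Fin (N + 1)) k) ≠ 0 := by
  intro h
  set p : Fin (N + 1 + n) → Fin (N + 1) → k := Fin.append (fun i => Pi.single i 1) fun _ _ => 1
  have hA : frameMatrix p = 1 := by
    ext r i
    simp [p, frameMatrix, Matrix.one_apply, Pi.single_apply]
  have h1 := congrArg (eval (Function.uncurry p)) h
  rw [eval_frameDiscr, map_zero, frameDiscr, hA] at h1
  simp [p, frameCoords, hA] at h1

/- The normal form pins the frame to the coordinate points, so its image is not dense; composing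
with every projectivity `g` and rescaling `c` gives maps whose images cover the locus
`frameDiscr ≠ 0` (`exists_cremonaFamily_eq`). -/
def cremonaFamily (g : GL (Fin (N + 1)) k) (c : Fin (N + 1 + n) → kˣ)
    (p : Fin (N + 1 + n) → Fin (N + 1) → k) : Fin (N + 1 + n) → Fin (N + 1) → k :=
  fun j => (c j : k) • ((g : Matrix (Fin (N + 1)) (Fin (N + 1)) k) *ᵥ cremonaNormalForm p j)

lemma cremonaFamily_eq_eval (g : GL (Fin (N + 1)) k) (c : Fin (N + 1 + n) → kˣ)
    (p : Fin (N + 1 + n) → Fin (N + 1) → k) :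
    cremonaFamily g c p = fun j r => eval (Function.uncurry p)
      (C (c j : k) * ((g : Matrix (Fin (N + 1)) (Fin (N + 1)) k).map C *ᵥ
        cremonaNormalForm (fun j r => X (j, r)) j) r) := by
  funext j r
  simp [cremonaFamily, RingHom.map_mulVec, map_cremonaNormalForm, Matrix.map_map, Function.comp_def]

lemma cremonaFamily_ne_zero {p : Fin (N + 1 + n) → Fin (N + 1) → k} (hp : frameDiscr p ≠ 0)
    (g : GL (Fin (N + 1)) k) (c : Fin (N + 1 + n) → kˣ) (j : Fin (N + 1 + n)) :
    cremonaFamily g c p j ≠ 0 := by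
  obtain ⟨-, hu⟩ := frameDiscr_ne_zero_iff.mp hp
  refine smul_ne_zero (c j).ne_zero fun h => ?_
  have hv : cremonaNormalForm p j = 0 := by
    simpa [Matrix.mulVec_mulVec] using
      congrArg ((↑g⁻¹ : Matrix (Fin (N + 1)) (Fin (N + 1)) k) *ᵥ ·) h
  induction j using Fin.addCases with
  | left i => simpa [cremonaNormalForm] using congrFun hv i
  | right j => exact cremonaPt_ne_zero (hu j) 0 (by simpa [cremonaNormalForm] using congrFun hv 0)

lemma exists_cremonaFamily_eq {x : Fin (N + 1 + n) → Fin (N + 1) → k} (hx : frameDiscr x ≠ 0) :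
    ∃ (g : GL (Fin (N + 1)) k) (c : Fin (N + 1 + n) → kˣ) (p : Fin (N + 1 + n) → Fin (N + 1) → k),
      frameDiscr p ≠ 0 ∧ cremonaFamily g c p = x := by
  obtain ⟨hA, hu⟩ := frameDiscr_ne_zero_iff.mp hx
  set A := frameMatrix x
  set p : Fin (N + 1 + n) → Fin (N + 1) → k := Fin.append (fun i => x (Fin.castAdd n i))
    fun j => A.det⁻¹ • (A *ᵥ cremonaPt (frameCoords x j))
  have hpA : frameMatrix p = A := by ext r i; simp [frameMatrix, p, A]
  have hpu : ∀ j, frameCoords p j = cremonaPt (frameCoords x j) := fun j => by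
    rw [frameCoords, hpA, show p (Fin.natAdd (N + 1) j) = _ from Fin.append_right _ _ j,
      Matrix.mulVec_smul, Matrix.mulVec_mulVec, Matrix.adjugate_mul, Matrix.smul_mulVec,
      Matrix.one_mulVec, smul_smul, inv_mul_cancel₀ hA, one_smul]
  have hc : ∀ j, (∏ l, frameCoords x j l) ^ ((Fintype.card (Fin (N + 1)) : ℤ) - 2) * A.det ≠ 0 :=
    fun j => mul_ne_zero (zpow_ne_zero _ (Finset.prod_ne_zero_iff.mpr fun l _ => hu j l)) hA
  refine ⟨.mkOfDetNeZero A hA, Fin.append (fun _ => 1) fun j => Units.mk0 _ (inv_ne_zero (hc j)),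
    p, frameDiscr_ne_zero_iff.mpr ⟨hpA ▸ hA, fun j i => hpu j ▸ cremonaPt_ne_zero (hu j) i⟩, ?_⟩
  funext j
  induction j using Fin.addCases with
  | left i => simpa [cremonaFamily, cremonaNormalForm, A] using frameMatrix_mulVec_piSingle x i
  | right j =>
    simp only [cremonaFamily, cremonaNormalForm, Fin.append_right, hpu, cremonaPt_cremonaPt (hu j)]
    rw [Units.val_mk0, Matrix.GeneralLinearGroup.val_mkOfDetNeZero, Matrix.mulVec_smul,
      frameMatrix_mulVec_frameCoords, smul_smul, smul_smul, mul_assoc, inv_mul_cancel₀ (hc j),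
      one_smul]

lemma exists_mem_fatIdealZ_of_cremonaFamily {p : Fin (N + 1 + n) → Fin (N + 1) → k}
    (hp : frameDiscr p ≠ 0) (g : GL (Fin (N + 1)) k) (c : Fin (N + 1 + n) → kˣ)
    {m : Fin (N + 1) → ℤ} {mbar : Fin n → ℤ} {d : ℕ} {e : ℤ} (he : e = (N - 1) * d - ∑ i, m i)
    {F : MvPolynomial (Fin (N + 1)) k} (hF0 : F ≠ 0) (hFd : F.IsHomogeneous d)
    (hF : F ∈ fatIdealZ (cremonaFamily g c p) (Fin.append m mbar)) :
    ∃ G ∈ fatIdealZ p (Fin.append (fun i => m i + e) mbar),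
      G ≠ 0 ∧ ∃ t : ℕ, (t : ℤ) = d + e ∧ G.IsHomogeneous t := by
  obtain ⟨hA, hu⟩ := frameDiscr_ne_zero_iff.mp hp
  have hg : IsUnit (g : Matrix (Fin (N + 1)) (Fin (N + 1)) k).det :=
    (Matrix.isUnit_iff_isUnit_det _).mp g.isUnit
  have hF₁ :
      linearSubst (g : Matrix _ _ k) F ∈ fatIdealZ (cremonaNormalForm p) (Fin.append m mbar) :=
    linearSubst_mem_fatIdealZ (fun j => ⟨(c j : k)⁻¹, by simp, by
      simp [cremonaFamily, smul_smul]⟩) hF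
  obtain ⟨G, hG, hG0, t, ht, hGt⟩ := exists_mem_fatIdealZ_cremona hu he
    ((linearSubst_injective hg).ne_iff' (map_zero _) |>.mpr hF0) (hFd.linearSubst _) hF₁
  refine ⟨linearSubst (frameMatrix p).adjugate G, linearSubst_mem_fatIdealZ (fun j => ?_) hG,
    ?_, t, ht, hGt.linearSubst _⟩
  · induction j using Fin.addCases with
    | left i =>
      refine ⟨(frameMatrix p).det, hA, ?_⟩
      rw [Fin.append_left, ← frameMatrix_mulVec_piSingle p, Matrix.mulVec_mulVec,
        Matrix.adjugate_mul, Matrix.smul_mulVec, Matrix.one_mulVec]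
    | right j => exact ⟨1, one_ne_zero, by rw [Fin.append_right, one_smul]; rfl⟩
  · refine (linearSubst_injective ?_).ne_iff' (map_zero _) |>.mpr hG0
    rw [Matrix.det_adjugate]
    exact (isUnit_iff_ne_zero.mpr hA).pow _

end FrameField

theorem Generic.cremona {k : Type*} [Field k] [Infinite k] {N n : ℕ} {m : Fin (N + 1) → ℤ}
    {mbar : Fin n → ℤ} {d : ℕ} {e : ℤ} (he : e = (N - 1) * d - ∑ i, m i)
    (h : Generic k N (N + 1 + n) fun p =>
      ∃ f ∈ fatIdealZ p (Fin.append m mbar), f ≠ 0 ∧ f.IsHomogeneous d) :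
    Generic k N (N + 1 + n) fun p =>
      ∃ f ∈ fatIdealZ p (Fin.append (fun i => m i + e) mbar),
        f ≠ 0 ∧ ∃ t : ℕ, (t : ℤ) = d + e ∧ f.IsHomogeneous t := by
  refine h.of_polynomial_maps (ι := GL (Fin (N + 1)) k × (Fin (N + 1 + n) → kˣ))
    (fun gc => cremonaFamily gc.1 gc.2) _ (fun gc => cremonaFamily_eq_eval gc.1 gc.2)
    (D := frameDiscr fun j r => X (j, r))
    frameDiscr_X_ne_zero ?_ ?_ ?_ ?_ <;> simp only [eval_frameDiscr]
  · exact fun p hp => ne_zero_of_frameDiscr_ne_zero hp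
  · exact fun gc p hp => cremonaFamily_ne_zero hp gc.1 gc.2
  · intro x hx
    obtain ⟨g, c, p, hp, rfl⟩ := exists_cremonaFamily_eq hx
    exact ⟨(g, c), p, hp, rfl⟩
  · rintro gc p hp ⟨F, hF, hF0, hFd⟩
    exact exists_mem_fatIdealZ_of_cremonaFamily hp gc.1 gc.2 he hF0 hFd hF

/-- Cremona transformation in `ℙ³`: if for general points the fat points ideal
`I(m₁,m₂,m₃,m₄,m̄)` contains a nonzero form of degree `d`, then for general points
`I(m₁+c, m₂+c, m₃+c, m₄+c, m̄)` contains a nonzero form of degree `d + c`, where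
`c = 2d - m₁ - m₂ - m₃ - m₄`. -/
theorem statement6 (k : Type*) [Field k] [CharZero k] (n : ℕ)
    (m₁ m₂ m₃ m₄ : ℤ) (mbar : Fin n → ℤ) (d : ℕ) (c : ℤ)
    (hc : c = 2 * (d : ℤ) - m₁ - m₂ - m₃ - m₄)
    (hyp : Generic k 3 (4 + n) (fun p =>
      ∃ f ∈ fatIdealZ p (Fin.append ![m₁, m₂, m₃, m₄] mbar),
        f ≠ 0 ∧ f.IsHomogeneous d)) :
    Generic k 3 (4 + n) (fun p =>
      ∃ f ∈ fatIdealZ p (Fin.append ![m₁ + c, m₂ + c, m₃ + c, m₄ + c] mbar),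
        f ≠ 0 ∧ ∃ t : ℕ, (t : ℤ) = (d : ℤ) + c ∧ f.IsHomogeneous t) := by
  have : Infinite k := Infinite.of_injective _ Nat.cast_injective
  have hshift : ![m₁ + c, m₂ + c, m₃ + c, m₄ + c] = fun i => ![m₁, m₂, m₃, m₄] i + c := by
    ext i; fin_cases i <;> rfl
  rw [hshift]
  exact Generic.cremona (by simp [Fin.sum_univ_four, hc]; ring) hyp
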